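/- arXiv:1010.2353 — 2 statements merged into one kernel-verified Lean document; each statement's English description precedes it below -/
import Mathlib

section
/- Let f : ℝ → ℝ≥0 be a C² function that is bounded and satisfies f''(s) ≥ δ² f(s) for all s ∈ ℝ, where δ > 0. Then there exists a constant C ≥ 0 such that f(s) ≤ C e^{−δ|s|} for all s ∈ ℝ. -/
/-!
The quantity `g = e^{-δs} (f' + δf)` has derivative `e^{-δs} (f'' - δ²f) ≥ 0`, so it is
nondecreasing. If `g` were positive somewhere, then `f' ≥ ε e^{δs} - δ sup f` would eventually
exceed `1` and `f` would be unbounded. Hence `f' + δf ≤ 0`, i.e. `e^{δs} f` is nonincreasing,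
which gives `f s ≤ f 0 · e^{-δs}` for `s ≥ 0`; the case `s ≤ 0` follows by applying this to
`s ↦ f (-s)`.
-/

open Filter Real

section

variable {f f' f'' : ℝ → ℝ} {δ : ℝ}

theorem tendsto_atTop_of_eventually_le_deriv (hf : ∀ s, HasDerivAt f (f' s) s) {c : ℝ}
    (hc : 0 < c) (h : ∀ᶠ s in atTop, c ≤ f' s) : Tendsto f atTop atTop := by
  obtain ⟨a, ha⟩ := eventually_atTop.mp h
  have hderiv (s : ℝ) : HasDerivAt (fun s => f s - c * s) (f' s - c) s :=
    ((hf s).sub ((hasDerivAt_id' s).const_mul c)).congr_deriv (by ring)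
  have hmono : MonotoneOn (fun s => f s - c * s) (Set.Ici a) :=
    monotoneOn_of_hasDerivWithinAt_nonneg (convex_Ici a)
      (fun s _ => (hderiv s).continuousAt.continuousWithinAt)
      (fun s _ => (hderiv s).hasDerivWithinAt)
      (fun s hs => by
        rw [interior_Ici] at hs
        linarith [ha s hs.le])
  have hlin : Tendsto (fun s => f a - c * a + c * s) atTop atTop :=
    tendsto_atTop_add_const_left _ _ (tendsto_id.const_mul_atTop hc)
  refine tendsto_atTop_mono' _ ?_ hlin
  filter_upwards [eventually_ge_atTop a] with s hs
  linarith [hmono Set.self_mem_Ici hs hs]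

theorem hasDerivAt_exp_mul (a s : ℝ) : HasDerivAt (fun s => exp (a * s)) (a * exp (a * s)) s := by
  simpa [mul_comm] using ((hasDerivAt_id s).const_mul a).exp

theorem monotone_exp_neg_mul_deriv_add (hf : ∀ s, HasDerivAt f (f' s) s)
    (hf' : ∀ s, HasDerivAt f' (f'' s) s) (hconv : ∀ s, δ ^ 2 * f s ≤ f'' s) :
    Monotone fun s => exp (-δ * s) * (f' s + δ * f s) := by
  refine monotone_of_hasDerivAt_nonneg (f' := fun s => exp (-δ * s) * (f'' s - δ ^ 2 * f s))
    (fun s => ?_) (fun s => ?_)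
  · exact ((hasDerivAt_exp_mul (-δ) s).mul ((hf' s).add ((hf s).const_mul δ))).congr_deriv
      (by simp only [Pi.add_apply]; ring)
  · exact mul_nonneg (exp_nonneg _) (sub_nonneg.mpr (hconv s))

theorem deriv_add_mul_nonpos_of_bddAbove (hδ : 0 < δ) (hf : ∀ s, HasDerivAt f (f' s) s)
    (hf' : ∀ s, HasDerivAt f' (f'' s) s) (hconv : ∀ s, δ ^ 2 * f s ≤ f'' s) {B : ℝ}
    (hB : ∀ s, f s ≤ B) (s : ℝ) : f' s + δ * f s ≤ 0 := by
  set ε := exp (-δ * s) * (f' s + δ * f s)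
  by_contra! hε
  have hε : 0 < ε := mul_pos (exp_pos _) hε
  have hlower : ∀ t ≥ s, ε * exp (δ * t) - δ * B ≤ f' t := by
    intro t ht
    have hmono : ε ≤ exp (-δ * t) * (f' t + δ * f t) :=
      monotone_exp_neg_mul_deriv_add hf hf' hconv ht
    have : ε * exp (δ * t) ≤ f' t + δ * f t := calc
      ε * exp (δ * t) ≤ exp (-δ * t) * (f' t + δ * f t) * exp (δ * t) := by gcongr
      _ = f' t + δ * f t := by rw [mul_right_comm, ← exp_add]; simp
    nlinarith [hB t]
  have hgrowth : Tendsto (fun t => ε * exp (δ * t) - δ * B) atTop atTop :=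
    tendsto_atTop_add_const_right _ _
      (((tendsto_exp_atTop.comp (tendsto_id.const_mul_atTop hδ))).const_mul_atTop hε)
  have hunbdd := tendsto_atTop_of_eventually_le_deriv hf one_pos <|
    (hgrowth.eventually_ge_atTop 1).mp <| (eventually_ge_atTop s).mono fun t ht h1 =>
      h1.trans (hlower t ht)
  obtain ⟨t, ht⟩ := (hunbdd.eventually_gt_atTop B).exists
  exact (hB t).not_gt ht

theorem le_mul_exp_neg_of_deriv_add_mul_nonpos (hf : ∀ s, HasDerivAt f (f' s) s)
    (h : ∀ s, f' s + δ * f s ≤ 0) {s : ℝ} (hs : 0 ≤ s) : f s ≤ f 0 * exp (-δ * s) := by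
  have hanti : Antitone fun s => exp (δ * s) * f s :=
    antitone_of_hasDerivAt_nonpos (f' := fun s => exp (δ * s) * (f' s + δ * f s))
      (fun s => ((hasDerivAt_exp_mul δ s).mul (hf s)).congr_deriv (by ring))
      (fun s => mul_nonpos_of_nonneg_of_nonpos (exp_nonneg _) (h s))
  have h := hanti hs
  simp only [mul_zero, exp_zero, one_mul] at h
  calc f s = exp (-δ * s) * (exp (δ * s) * f s) := by
        rw [← mul_assoc, ← exp_add, neg_mul, neg_add_cancel, exp_zero, one_mul]
    _ ≤ exp (-δ * s) * f 0 := mul_le_mul_of_nonneg_left h (exp_nonneg _)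
    _ = f 0 * exp (-δ * s) := mul_comm _ _

theorem le_mul_exp_neg_of_bddAbove (hδ : 0 < δ)
    (hf : ∀ s, HasDerivAt f (f' s) s) (hf' : ∀ s, HasDerivAt f' (f'' s) s)
    (hconv : ∀ s, δ ^ 2 * f s ≤ f'' s) {B : ℝ} (hB : ∀ s, f s ≤ B) {s : ℝ} (hs : 0 ≤ s) :
    f s ≤ f 0 * exp (-δ * s) :=
  le_mul_exp_neg_of_deriv_add_mul_nonpos hf
    (deriv_add_mul_nonpos_of_bddAbove hδ hf hf' hconv hB) hs

end

/-- a bounded nonnegative `C²` function on `ℝ` with `f'' ≥ δ² f`, `δ > 0`,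
decays exponentially: `f(s) ≤ C e^{-δ|s|}` for some constant `C ≥ 0`. -/
theorem stmt_4 (f : ℝ → ℝ) (δ : ℝ) (hδ : 0 < δ)
    (hf : ContDiff ℝ 2 f) (hnonneg : ∀ s, 0 ≤ f s)
    (hbdd : ∃ B : ℝ, ∀ s, f s ≤ B)
    (hconv : ∀ s, δ ^ 2 * f s ≤ iteratedDeriv 2 f s) :
    ∃ C : ℝ, 0 ≤ C ∧ ∀ s, f s ≤ C * Real.exp (-δ * |s|) := by
  obtain ⟨B, hB⟩ := hbdd
  have hf₁ (s : ℝ) : HasDerivAt f (deriv f s) s := (hf.differentiable two_ne_zero s).hasDerivAt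
  have hf₂ (s : ℝ) : HasDerivAt (deriv f) (iteratedDeriv 2 f s) s := by
    simpa [iteratedDeriv_succ] using (hf.differentiable_iteratedDeriv' 1 s).hasDerivAt
  have hf₁_neg (s : ℝ) : HasDerivAt (fun x => f (-x)) (-deriv f (-s)) s :=
    ((hf₁ (-s)).comp s (hasDerivAt_neg s)).congr_deriv (by ring)
  have hf₂_neg (s : ℝ) : HasDerivAt (fun x => -deriv f (-x)) (iteratedDeriv 2 f (-s)) s :=
    ((hf₂ (-s)).comp s (hasDerivAt_neg s)).neg.congr_deriv (by ring)
  refine ⟨f 0, hnonneg 0, fun s => ?_⟩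
  rcases le_total 0 s with hs | hs
  · rw [abs_of_nonneg hs]
    exact le_mul_exp_neg_of_bddAbove hδ hf₁ hf₂ hconv hB hs
  · simpa [abs_of_nonpos hs] using le_mul_exp_neg_of_bddAbove hδ hf₁_neg hf₂_neg
      (fun s => hconv (-s)) (fun s => hB (-s)) (neg_nonneg.mpr hs)
end

section
/- Let u : ℝ² → M be a smooth map with f ∘ u = φ + iψ where f is J-holomorphic and u satisfies ∂_s u + J(∂_t u + v^t(u)) = 0 with v^t = cosθ_ν(t)·v₀ + sinθ_ν(t)·v₁. Then φ and ψ satisfy the perturbed Cauchy–Riemann system ∂_s φ − ∂_t ψ = sinθ_ν(t) · ρ(u) and ∂_s ψ + ∂_t φ = −cosθ_ν(t) · ρ(u), where ρ = |v₀|². -/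
open scoped RealInnerProductSpace

/-!
Apply the real-linear, `J`-complex-linear map `L = df(u)` to the Floer equation
`∂ₛu = -J(∂ₜu + c v₀ + s v₁)`. Compatibility of `J` with the alternating form `ω` makes `J`
skew-adjoint, so `v₁ = J v₀` and `L v₀ = ‖v₀‖²`; hence
`∂ₛ(f ∘ u) + i ∂ₜ(f ∘ u) = -i (c + i s) ‖v₀‖² = (s - i c) ‖v₀‖²`,
whose real and imaginary parts are the two perturbed Cauchy–Riemann equations.
-/

theorem fderiv_re_comp_apply {E F : Type*} [NormedAddCommGroup E] [NormedSpace ℝ E]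
    [NormedAddCommGroup F] [NormedSpace ℝ F]
    {f : E → ℂ} {u : F → E} {p : F} (hf : DifferentiableAt ℝ f (u p))
    (hu : DifferentiableAt ℝ u p) (x : F) :
    fderiv ℝ (fun q => (f (u q)).re) p x = (fderiv ℝ f (u p) (fderiv ℝ u p x)).re :=
  congrArg (· x) (Complex.reCLM.hasFDerivAt.comp p (hf.hasFDerivAt.comp p hu.hasFDerivAt)).fderiv

theorem fderiv_im_comp_apply {E F : Type*} [NormedAddCommGroup E] [NormedSpace ℝ E]
    [NormedAddCommGroup F] [NormedSpace ℝ F]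
    {f : E → ℂ} {u : F → E} {p : F} (hf : DifferentiableAt ℝ f (u p))
    (hu : DifferentiableAt ℝ u p) (x : F) :
    fderiv ℝ (fun q => (f (u q)).im) p x = (fderiv ℝ f (u p) (fderiv ℝ u p x)).im :=
  congrArg (· x) (Complex.imCLM.hasFDerivAt.comp p (hf.hasFDerivAt.comp p hu.hasFDerivAt)).fderiv

section SkewAdjoint

variable {E : Type*} [NormedAddCommGroup E] [InnerProductSpace ℝ E] {J : E →ₗ[ℝ] E}
  {L : E →ₗ[ℝ] ℂ} {a b : E}

theorem isSkewAdjoint_of_isAlt_of_inner_eq {ω : E →ₗ[ℝ] E →ₗ[ℝ] ℝ}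
    (hω : ω.IsAlt) (hcompat : ∀ x y, ⟪x, y⟫ = ω x (J y)) :
    (innerₗ E).IsSkewAdjoint J := by
  intro x y
  simp only [innerₗ_apply_apply, Pi.neg_apply, inner_neg_right]
  rw [real_inner_comm (J y), hcompat, hcompat]
  exact (hω.neg _ _).symm

theorem inner_map_eq_neg_inner_map (hJ : (innerₗ E).IsSkewAdjoint J) (x y : E) :
    ⟪J x, y⟫ = -⟪x, J y⟫ := by
  simpa using hJ x y

theorem inner_self_map_eq_zero (hJ : (innerₗ E).IsSkewAdjoint J) (x : E) : ⟪x, J x⟫ = 0 := by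
  have h := inner_map_eq_neg_inner_map hJ x x
  rw [real_inner_comm] at h
  linarith

variable (hJ : (innerₗ E).IsSkewAdjoint J) (hL : ∀ x, L (J x) = Complex.I * L x)
  (ha : ∀ x, ⟪a, x⟫ = (L x).re)
include hJ hL ha

theorem eq_map_of_inner_eq_im (hb : ∀ x, ⟪b, x⟫ = (L x).im) : b = J a := by
  refine ext_inner_right ℝ fun x => ?_
  have hre : ⟪a, J x⟫ = -(L x).im := by simp [ha, hL]
  rw [hb, inner_map_eq_neg_inner_map hJ, hre, neg_neg]

theorem map_eq_norm_sq : L a = (‖a‖ ^ 2 : ℝ) := by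
  have him : (L a).im = -⟪a, J a⟫ := by simp [ha, hL]
  apply Complex.ext
  · rw [← ha, real_inner_self_eq_norm_sq, Complex.ofReal_re]
  · rw [him, inner_self_map_eq_zero hJ, neg_zero, Complex.ofReal_im]

theorem map_add_I_mul_map_eq (hb : ∀ x, ⟪b, x⟫ = (L x).im) {X Y : E} {c s : ℝ}
    (h : X + J (Y + (c • a + s • b)) = 0) :
    L X + Complex.I * L Y = (s - c * Complex.I) * (‖a‖ ^ 2 : ℝ) := by
  have hX : L X = -(Complex.I * (L Y + L (c • a + s • b))) := by
    rw [eq_neg_of_add_eq_zero_left h, map_neg, hL, map_add]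
  have hV : L (c • a + s • b) = (c + s * Complex.I) * (‖a‖ ^ 2 : ℝ) := by
    rw [map_add, map_smul, map_smul, eq_map_of_inner_eq_im hJ hL ha hb, hL,
      map_eq_norm_sq hJ hL ha, Complex.real_smul, Complex.real_smul]
    ring
  rw [hX, hV]
  linear_combination (-(s : ℂ) * (‖a‖ ^ 2 : ℝ)) * Complex.I_sq

end SkewAdjoint

/-- for a solution `u` of `∂_s u + J(∂_t u + v^t(u)) = 0` with
`v^t = cosθ_ν(t)·v₀ + sinθ_ν(t)·v₁`, writing `f ∘ u = φ + iψ` for the `J`-holomorphic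
`f`, the functions `φ, ψ` satisfy the perturbed Cauchy–Riemann system
`∂_s φ - ∂_t ψ = sinθ_ν(t)·ρ(u)` and `∂_s ψ + ∂_t φ = -cosθ_ν(t)·ρ(u)`,
where `ρ = |v₀|²`.  (Flat model: `g = ⟪·,·⟫`, `g(·,·) = ω(·,J·)`, `v₀ = grad f₀`,
`v₁ = grad f₁ = J v₀`.) -/
theorem stmt_13 {E : Type*} [NormedAddCommGroup E] [InnerProductSpace ℝ E]
    (ω : E → E →ₗ[ℝ] E →ₗ[ℝ] ℝ) (J : E → E →ₗ[ℝ] E)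
    (hωalt : ∀ m (x : E), ω m x x = 0)
    (hcompat : ∀ m (x y : E), ⟪x, y⟫ = ω m x (J m y))
    (f : E → ℂ) (hf : Differentiable ℝ f)
    (hhol : ∀ m (x : E), fderiv ℝ f m (J m x) = Complex.I * fderiv ℝ f m x)
    (v₀ v₁ : E → E)
    (hv₀ : ∀ m (x : E), ⟪v₀ m, x⟫ = (fderiv ℝ f m x).re)
    (hv₁ : ∀ m (x : E), ⟪v₁ m, x⟫ = (fderiv ℝ f m x).im)
    (θν : ℝ → ℝ) (u : ℝ × ℝ → E) (hu : Differentiable ℝ u)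
    (hFloer : ∀ p : ℝ × ℝ,
      fderiv ℝ u p (1, 0)
        + J (u p) (fderiv ℝ u p (0, 1)
            + (Real.cos (θν p.2) • v₀ (u p) + Real.sin (θν p.2) • v₁ (u p))) = 0)
    (φ ψ : ℝ × ℝ → ℝ)
    (hφ : φ = fun p => (f (u p)).re) (hψ : ψ = fun p => (f (u p)).im) :
    ∀ p : ℝ × ℝ,
      fderiv ℝ φ p (1, 0) - fderiv ℝ ψ p (0, 1)
          = Real.sin (θν p.2) * ‖v₀ (u p)‖ ^ 2
      ∧ fderiv ℝ ψ p (1, 0) + fderiv ℝ φ p (0, 1)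
          = -(Real.cos (θν p.2) * ‖v₀ (u p)‖ ^ 2) := by
  intro p
  have hJ := isSkewAdjoint_of_isAlt_of_inner_eq (hωalt (u p)) (hcompat (u p))
  have key := map_add_I_mul_map_eq (L := (fderiv ℝ f (u p) : E →ₗ[ℝ] ℂ)) hJ (hhol (u p))
    (hv₀ (u p)) (hv₁ (u p)) (hFloer p)
  have hre := congrArg Complex.re key
  have him := congrArg Complex.im key
  simp only [Complex.add_re, Complex.add_im, Complex.mul_re, Complex.mul_im, Complex.I_re,
    Complex.I_im, Complex.sub_re, Complex.sub_im, Complex.ofReal_re, Complex.ofReal_im,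
    ContinuousLinearMap.coe_coe] at hre him
  subst hφ hψ
  simp only [fderiv_re_comp_apply (hf (u p)) (hu p), fderiv_im_comp_apply (hf (u p)) (hu p)]
  constructor <;> linarith
end
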